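/- arXiv:2006.13543 — 4 statements merged into one kernel-verified Lean document; each statement's English description precedes it below -/
import Mathlib

section
/- Let A ∈ ℝ^{n×n} be a symmetric matrix and B ∈ ℝ^{n×m}. Suppose A is positive definite on the null space of Bᵀ, i.e., cᵀAc > 0 for all nonzero c ∈ ℝⁿ with Bᵀc = 0. Then for any a ∈ ℝⁿ and b ∈ ℝᵐ, there exists a vector w ∈ ℝⁿ such that Aw + Bv = a for some v ∈ ℝᵐ and Bᵀw = b, if and only if b lies in the range of Bᵀ; moreover, such w is unique. -/
/-!
Any solution has `Bᵀ w = b`, so `b` must lie in the range of `Bᵀ`. Conversely, fix `w₀` with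
`Bᵀ w₀ = b` and look for `w = w₀ + k` with `k ∈ K = ker Bᵀ`; the first equation asks for
`a - A w ∈ range B`, the annihilator of `K`. The form `(c, k) ↦ cᵀ A k` has no nonzero isotropic
vector on `K`, so it is nondegenerate there, and by finite dimensionality the functional
`c ↦ cᵀ (a - A w₀)` on `K` is `c ↦ cᵀ A k` for some `k ∈ K`. For uniqueness, the difference `d` of
two solutions lies in `K` and `A d ∈ range B`, whence `dᵀ A d = 0` and `d = 0`.
-/

open Matrix

namespace Matrix

variable {𝕜 ι κ : Type*} [Fintype ι] [Fintype κ] [Field 𝕜]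

theorem exists_mulVec_eq_of_forall_dotProduct_eq_zero
    (B : Matrix ι κ 𝕜) (r : ι → 𝕜) (h : ∀ c, Bᵀ *ᵥ c = 0 → c ⬝ᵥ r = 0) :
    ∃ v, B *ᵥ v = r := by
  classical
  let β : (ι → 𝕜) →ₗ[𝕜] (κ → 𝕜) →ₗ[𝕜] 𝕜 := toLinearMap₂' 𝕜 B
  have mem_ker (c) : c ∈ LinearMap.ker β ↔ Bᵀ *ᵥ c = 0 := by
    simp only [β, LinearMap.mem_ker, LinearMap.ext_iff, LinearMap.zero_apply, toLinearMap₂'_apply',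
      dotProduct_mulVec, ← mulVec_transpose]
    simpa using dotProduct_eq_iff (v := Bᵀ *ᵥ c) (w := 0)
  have hr : dotProductEquiv 𝕜 ι r ∈ (LinearMap.ker β).dualAnnihilator := by
    rw [Submodule.mem_dualAnnihilator]
    intro c hc
    simpa [dotProduct_comm r] using h c ((mem_ker c).1 hc)
  rw [LinearMap.dualAnnihilator_ker_eq_range_flip] at hr
  obtain ⟨v, hv⟩ := hr
  refine ⟨v, dotProduct_eq _ _ fun c => ?_⟩
  simpa [β, toLinearMap₂'_apply', dotProduct_comm c] using LinearMap.congr_fun hv c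

variable (A : Matrix ι ι 𝕜) (B : Matrix ι κ 𝕜)
  (hA : ∀ c, c ≠ 0 → Bᵀ *ᵥ c = 0 → c ⬝ᵥ A *ᵥ c ≠ 0)
include hA

theorem exists_transpose_mulVec_eq_zero_and_mulVec_add_mulVec_eq (r : ι → 𝕜) :
    ∃ k v, Bᵀ *ᵥ k = 0 ∧ A *ᵥ k + B *ᵥ v = r := by
  classical
  let K := LinearMap.ker Bᵀ.mulVecLin
  let α : K →ₗ[𝕜] K →ₗ[𝕜] 𝕜 := (toLinearMap₂' 𝕜 A).compl₁₂ K.subtype K.subtype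
  have α_apply (c k : K) : α c k = (c : ι → 𝕜) ⬝ᵥ A *ᵥ k := toLinearMap₂'_apply' A c k
  have α_injective : Function.Injective α := by
    refine (injective_iff_map_eq_zero α).2 fun c hc => ?_
    by_contra hc0
    exact hA c (by simpa using hc0) c.2 (by rw [← α_apply, hc, LinearMap.zero_apply])
  obtain ⟨k, hk⟩ := (LinearMap.flip_surjective_iff₁.2 α_injective)
    (dotProductEquiv 𝕜 ι r ∘ₗ K.subtype)
  obtain ⟨v, hv⟩ := exists_mulVec_eq_of_forall_dotProduct_eq_zero B (r - A *ᵥ k) fun c hc => by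
    have := LinearMap.congr_fun hk ⟨c, hc⟩
    simp only [LinearMap.flip_apply, α_apply] at this
    simp [dotProduct_sub, this, dotProduct_comm r]
  exact ⟨k, v, k.2, by rw [hv, add_sub_cancel]⟩

theorem eq_of_mulVec_add_mulVec_eq {w₁ w₂ : ι → 𝕜} {v₁ v₂ : κ → 𝕜}
    (h : A *ᵥ w₁ + B *ᵥ v₁ = A *ᵥ w₂ + B *ᵥ v₂) (hw : Bᵀ *ᵥ w₁ = Bᵀ *ᵥ w₂) : w₁ = w₂ := by
  have hker : Bᵀ *ᵥ (w₁ - w₂) = 0 := by rw [mulVec_sub, hw, sub_self]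
  have hAd : A *ᵥ (w₁ - w₂) = B *ᵥ (v₂ - v₁) := by
    rw [mulVec_sub, mulVec_sub]
    linear_combination h
  by_contra hne
  refine hA _ (sub_ne_zero.2 hne) hker ?_
  rw [hAd, dotProduct_mulVec, ← mulVec_transpose, hker, zero_dotProduct]

end Matrix

theorem stmt0_general {n m : ℕ} (A : Matrix (Fin n) (Fin n) ℝ) (B : Matrix (Fin n) (Fin m) ℝ)
    (hpd : ∀ c : Fin n → ℝ, c ≠ 0 → Bᵀ.mulVec c = 0 → 0 < c ⬝ᵥ A.mulVec c)
    (a : Fin n → ℝ) (b : Fin m → ℝ) :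
    (∃! w : Fin n → ℝ, (∃ v : Fin m → ℝ, A.mulVec w + B.mulVec v = a) ∧ Bᵀ.mulVec w = b)
      ↔ (∃ w₀ : Fin n → ℝ, Bᵀ.mulVec w₀ = b) := by
  have hA (c : Fin n → ℝ) (hc : c ≠ 0) (hBc : Bᵀ *ᵥ c = 0) : c ⬝ᵥ A *ᵥ c ≠ 0 :=
    (hpd c hc hBc).ne'
  refine ⟨fun ⟨w, ⟨_, hw⟩, _⟩ => ⟨w, hw⟩, fun ⟨w₀, hw₀⟩ => ?_⟩
  obtain ⟨k, v, hk, hkv⟩ :=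
    exists_transpose_mulVec_eq_zero_and_mulVec_add_mulVec_eq A B hA (a - A *ᵥ w₀)
  have hsol : A *ᵥ (w₀ + k) + B *ᵥ v = a := by rw [mulVec_add, add_assoc, hkv, add_sub_cancel]
  have hconstr : Bᵀ *ᵥ (w₀ + k) = b := by rw [mulVec_add, hw₀, hk, add_zero]
  refine ⟨w₀ + k, ⟨⟨v, hsol⟩, hconstr⟩, fun w ⟨⟨v', hv'⟩, hw⟩ => ?_⟩
  exact eq_of_mulVec_add_mulVec_eq A B hA (hv'.trans hsol.symm) (hw.trans hconstr.symm)

theorem stmt0 {n m : ℕ} (A : Matrix (Fin n) (Fin n) ℝ) (B : Matrix (Fin n) (Fin m) ℝ)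
    (hA : A.IsSymm)
    (hpd : ∀ c : Fin n → ℝ, c ≠ 0 → Bᵀ.mulVec c = 0 → 0 < c ⬝ᵥ A.mulVec c)
    (a : Fin n → ℝ) (b : Fin m → ℝ) :
    (∃! w : Fin n → ℝ, (∃ v : Fin m → ℝ, A.mulVec w + B.mulVec v = a) ∧ Bᵀ.mulVec w = b)
      ↔ (∃ w₀ : Fin n → ℝ, Bᵀ.mulVec w₀ = b) :=
  stmt0_general A B hpd a b
end

section
/- Let A ∈ ℝ^{n×n} and B ∈ ℝ^{n×m} be arbitrary matrices such that xᵀAx ≠ 0 for all nonzero x in the null space of Bᵀ. Then for any a ∈ ℝⁿ and b ∈ ℝᵐ with b in the range of Bᵀ, there exists a unique w ∈ ℝⁿ such that Bᵀw = b and Aw − a lies in the range of B. -/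
/-!
Put `N = ker Bᵀ`. Then `range B = Nᗮ`, so we look for `w ∈ w₀ + N` with `A w - a ⊥ N`.
The compression of `A` to `N` (orthogonal projection onto `N` after `A`) is injective because
`⟪x, A x⟫ ≠ 0` for `0 ≠ x ∈ N`, hence surjective as `N` is finite dimensional; this gives a
solution. The difference `d` of two solutions lies in `N` with `A d ⊥ N`, so `⟪d, A d⟫ = 0` and
`d = 0`.
-/

open Matrix
open scoped InnerProductSpace

section Compression

variable {𝕜 E : Type*} [RCLike 𝕜] [NormedAddCommGroup E] [InnerProductSpace 𝕜 E]
  {f : E →ₗ[𝕜] E} {N : Submodule 𝕜 E}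

theorem eq_of_sub_mem_of_map_sub_mem_orthogonal (hf : ∀ u ∈ N, ⟪u, f u⟫_𝕜 = 0 → u = 0)
    {w₁ w₂ : E} (hN : w₁ - w₂ ∈ N) (hNperp : f w₁ - f w₂ ∈ Nᗮ) : w₁ = w₂ := by
  rw [← map_sub] at hNperp
  exact sub_eq_zero.mp <| hf _ hN <| (Submodule.mem_orthogonal N _).mp hNperp _ hN

variable [FiniteDimensional 𝕜 E]

theorem exists_mem_map_sub_mem_orthogonal (hf : ∀ u ∈ N, ⟪u, f u⟫_𝕜 = 0 → u = 0) (c : E) :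
    ∃ u ∈ N, f u - c ∈ Nᗮ := by
  set T : N →ₗ[𝕜] N := N.orthogonalProjectionOnto.toLinearMap ∘ₗ f ∘ₗ N.subtype
  have hT : Function.Injective T := by
    rw [← LinearMap.ker_eq_bot, Submodule.eq_bot_iff]
    intro u hu
    have hfu : f u ∈ Nᗮ := Submodule.orthogonalProjectionOnto_eq_zero_iff.mp hu
    exact Subtype.ext <| hf u u.2 <| (Submodule.mem_orthogonal N _).mp hfu u u.2
  obtain ⟨u, hu⟩ := LinearMap.injective_iff_surjective.mp hT (N.orthogonalProjectionOnto c)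
  refine ⟨u, u.2, Submodule.orthogonalProjectionOnto_eq_zero_iff.mp ?_⟩
  rw [map_sub, sub_eq_zero]
  exact hu

theorem existsUnique_sub_mem_and_map_sub_mem_orthogonal
    (hf : ∀ u ∈ N, ⟪u, f u⟫_𝕜 = 0 → u = 0) (w₀ c : E) :
    ∃! w : E, w - w₀ ∈ N ∧ f w - c ∈ Nᗮ := by
  obtain ⟨u, hu, hfu⟩ := exists_mem_map_sub_mem_orthogonal hf (c - f w₀)
  have hsol : f (w₀ + u) - c ∈ Nᗮ := by
    convert hfu using 1
    rw [map_add]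
    abel
  refine ⟨w₀ + u, ⟨by simpa using hu, hsol⟩, fun w ⟨hw, hfw⟩ ↦ ?_⟩
  refine eq_of_sub_mem_of_map_sub_mem_orthogonal hf ?_ ?_
  · simpa [sub_sub] using N.sub_mem hw hu
  · simpa using Nᗮ.sub_mem hfw hsol

end Compression

theorem LinearMap.existsUnique_eq_and_map_sub_mem_range_adjoint {𝕜 E F : Type*} [RCLike 𝕜]
    [NormedAddCommGroup E] [InnerProductSpace 𝕜 E] [FiniteDimensional 𝕜 E]
    [NormedAddCommGroup F] [InnerProductSpace 𝕜 F] [FiniteDimensional 𝕜 F]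
    (f : E →ₗ[𝕜] E) (g : E →ₗ[𝕜] F) (hf : ∀ x, g x = 0 → ⟪x, f x⟫_𝕜 = 0 → x = 0)
    {b : F} (hb : b ∈ LinearMap.range g) (a : E) :
    ∃! w : E, g w = b ∧ f w - a ∈ LinearMap.range g.adjoint := by
  obtain ⟨w₀, rfl⟩ := hb
  convert existsUnique_sub_mem_and_map_sub_mem_orthogonal (N := LinearMap.ker g) hf w₀ a
    using 3 with w
  · simp [sub_eq_zero]
  · rw [g.orthogonal_ker]

theorem Matrix.toLp_mem_range_toEuclideanLin_iff {𝕜 m n : Type*} [RCLike 𝕜] [Fintype n]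
    [DecidableEq n] (M : Matrix m n 𝕜) (y : m → 𝕜) :
    WithLp.toLp 2 y ∈ LinearMap.range (toEuclideanLin M) ↔ ∃ v, M *ᵥ v = y :=
  ⟨fun ⟨v, hv⟩ ↦ ⟨WithLp.ofLp v, congrArg WithLp.ofLp hv⟩,
    fun ⟨v, hv⟩ ↦ ⟨WithLp.toLp 2 v, hv ▸ rfl⟩⟩

theorem stmt1 {n m : ℕ} (A : Matrix (Fin n) (Fin n) ℝ) (B : Matrix (Fin n) (Fin m) ℝ)
    (hdef : ∀ x : Fin n → ℝ, x ≠ 0 → Bᵀ.mulVec x = 0 → x ⬝ᵥ A.mulVec x ≠ 0)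
    (a : Fin n → ℝ) (b : Fin m → ℝ) (hb : ∃ w₀ : Fin n → ℝ, Bᵀ.mulVec w₀ = b) :
    ∃! w : Fin n → ℝ, Bᵀ.mulVec w = b ∧ ∃ v : Fin m → ℝ, B.mulVec v = A.mulVec w - a := by
  have hadj : (toEuclideanLin Bᵀ).adjoint = toEuclideanLin B := by
    rw [← toEuclideanLin_conjTranspose_eq_adjoint, conjTranspose_eq_transpose_of_trivial,
      transpose_transpose]
  have hf (x : EuclideanSpace ℝ (Fin n)) (hx : toEuclideanLin Bᵀ x = 0)
      (hxAx : ⟪x, toEuclideanLin A x⟫_ℝ = 0) : x = 0 := by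
    by_contra hne
    refine hdef x.ofLp (by simpa using hne) (congrArg WithLp.ofLp hx) ?_
    rwa [EuclideanSpace.inner_eq_star_dotProduct, star_trivial, dotProduct_comm] at hxAx
  have hb' : WithLp.toLp 2 b ∈ LinearMap.range (toEuclideanLin Bᵀ) :=
    (toLp_mem_range_toEuclideanLin_iff _ _).mpr hb
  refine (WithLp.equiv 2 (Fin n → ℝ)).symm.existsUnique_congr (fun w ↦ ?_) |>.mpr <|
    LinearMap.existsUnique_eq_and_map_sub_mem_range_adjoint _ _ hf hb' (WithLp.toLp 2 a)
  simp only [WithLp.equiv_symm_apply, hadj, toLpLin_toLp, ← WithLp.toLp_sub,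
    toLp_mem_range_toEuclideanLin_iff, (WithLp.toLp_injective 2).eq_iff, toLin'_apply]
end

section
/- Let K ∈ ℝ^{n×n} be symmetric and positive definite on N(Pᵀ), P ∈ ℝ^{n×m}, and let M have columns forming a basis of N(Pᵀ). If b ∈ range(Pᵀ), then the (generally overdetermined) linear system MᵀK w = Mᵀ a, Pᵀ w = b has a unique solution w, and this w together with some v solves the saddle point system Kw + Pv = a, Pᵀw = b. -/
/-!
Since the columns of `M` span `N(Pᵀ)`, the condition `Mᵀ x = 0` says that `x` is orthogonal to
`N(Pᵀ)`. Two solutions differ by some `d ∈ N(Pᵀ)` with `Kd ⊥ N(Pᵀ)`, so `dᵀKd = 0` and `d = 0`.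
For existence, write `w = w₀ + Mu`; positivity of `K` on `N(Pᵀ)` and injectivity of `M` make
the square matrix `MᵀKM` invertible, which determines `u`. Finally the residual `a - Kw` is
orthogonal to `N(Pᵀ)`, hence lies in `N(Pᵀ)^⊥ = range P`.
-/

open Matrix

namespace Matrix

theorem exists_mulVec_eq_of_orthogonal_ker_transpose {ι κ : Type*} [Fintype ι] [Fintype κ]
    [DecidableEq ι] [DecidableEq κ]
    (A : Matrix ι κ ℝ) {x : ι → ℝ} (hx : ∀ c, Aᵀ *ᵥ c = 0 → x ⬝ᵥ c = 0) :
    ∃ v, A *ᵥ v = x := by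
  have hmem : WithLp.toLp 2 x ∈ (toEuclideanLin Aᵀ).kerᗮ := by
    refine (Submodule.mem_orthogonal _ _).mpr fun c hc => ?_
    rw [LinearMap.mem_ker, toLpLin_apply, WithLp.toLp_eq_zero] at hc
    exact hx c.ofLp hc
  rw [LinearMap.orthogonal_ker, ← toEuclideanLin_conjTranspose_eq_adjoint,
    conjTranspose_eq_transpose_of_trivial, transpose_transpose] at hmem
  obtain ⟨v, hv⟩ := hmem
  exact ⟨v.ofLp, congrArg WithLp.ofLp hv⟩

end Matrix

section NullSpaceMethod

variable {ι κ μ : Type*} [Fintype ι] [Fintype κ]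
  {K : Matrix ι ι ℝ} {P : Matrix ι μ ℝ} {M : Matrix ι κ ℝ}

theorem dotProduct_eq_zero_of_transpose_mulVec_eq_zero
    (hMspan : ∀ c, Pᵀ *ᵥ c = 0 → ∃ u, M *ᵥ u = c) {x c : ι → ℝ}
    (hx : Mᵀ *ᵥ x = 0) (hc : Pᵀ *ᵥ c = 0) : x ⬝ᵥ c = 0 := by
  obtain ⟨u, rfl⟩ := hMspan c hc
  rw [← dotProduct_transpose_mulVec, hx, dotProduct_zero]

theorem transpose_mul_mul_mulVec_injective
    (hpd : ∀ c, c ≠ 0 → Pᵀ *ᵥ c = 0 → 0 < c ⬝ᵥ K *ᵥ c)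
    (hMnull : ∀ u, Pᵀ *ᵥ (M *ᵥ u) = 0) (hMinj : Function.Injective M.mulVec) :
    Function.Injective (Mᵀ * K * M).mulVec := by
  refine (injective_iff_map_eq_zero (mulVecLin (Mᵀ * K * M))).mpr fun u hu => ?_
  have hquad : M *ᵥ u ⬝ᵥ K *ᵥ (M *ᵥ u) = 0 := by
    change (Mᵀ * K * M) *ᵥ u = 0 at hu
    rw [dotProduct_comm, ← dotProduct_transpose_mulVec, mulVec_mulVec, mulVec_mulVec, hu,
      dotProduct_zero]
  have hMu : M *ᵥ u = 0 := by
    by_contra hne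
    exact (hpd _ hne (hMnull u)).ne' hquad
  exact hMinj (hMu.trans (mulVec_zero M).symm)

theorem exists_null_space_solution [DecidableEq κ]
    (hpd : ∀ c, c ≠ 0 → Pᵀ *ᵥ c = 0 → 0 < c ⬝ᵥ K *ᵥ c)
    (hMnull : ∀ u, Pᵀ *ᵥ (M *ᵥ u) = 0) (hMinj : Function.Injective M.mulVec)
    (a w₀ : ι → ℝ) : ∃ w, (Mᵀ * K) *ᵥ w = Mᵀ *ᵥ a ∧ Pᵀ *ᵥ w = Pᵀ *ᵥ w₀ := by
  have hsurj : Function.Surjective (Mᵀ * K * M).mulVec :=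
    mulVec_surjective_iff_isUnit.mpr <| mulVec_injective_iff_isUnit.mp <|
      transpose_mul_mul_mulVec_injective hpd hMnull hMinj
  obtain ⟨u, hu⟩ := hsurj (Mᵀ *ᵥ a - (Mᵀ * K) *ᵥ w₀)
  refine ⟨w₀ + M *ᵥ u, ?_, ?_⟩
  · rw [mulVec_add, mulVec_mulVec, hu, add_sub_cancel]
  · rw [mulVec_add, hMnull, add_zero]

theorem eq_of_null_space_system
    (hpd : ∀ c, c ≠ 0 → Pᵀ *ᵥ c = 0 → 0 < c ⬝ᵥ K *ᵥ c)
    (hMspan : ∀ c, Pᵀ *ᵥ c = 0 → ∃ u, M *ᵥ u = c) {w w' : ι → ℝ}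
    (hMK : (Mᵀ * K) *ᵥ w = (Mᵀ * K) *ᵥ w') (hP : Pᵀ *ᵥ w = Pᵀ *ᵥ w') : w = w' := by
  have hd : Pᵀ *ᵥ (w - w') = 0 := by rw [mulVec_sub, hP, sub_self]
  have hKd : Mᵀ *ᵥ (K *ᵥ (w - w')) = 0 := by rw [mulVec_mulVec, mulVec_sub, hMK, sub_self]
  have hquad : (w - w') ⬝ᵥ K *ᵥ (w - w') = 0 := by
    rw [dotProduct_comm]
    exact dotProduct_eq_zero_of_transpose_mulVec_eq_zero hMspan hKd hd
  by_contra hne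
  exact (hpd _ (sub_ne_zero.mpr hne) hd).ne' hquad

theorem exists_saddle_point_multiplier [Fintype μ] [DecidableEq ι] [DecidableEq μ]
    (hMspan : ∀ c, Pᵀ *ᵥ c = 0 → ∃ u, M *ᵥ u = c) {a w : ι → ℝ}
    (hw : (Mᵀ * K) *ᵥ w = Mᵀ *ᵥ a) : ∃ v, K *ᵥ w + P *ᵥ v = a := by
  have hres : Mᵀ *ᵥ (a - K *ᵥ w) = 0 := by rw [mulVec_sub, mulVec_mulVec, hw, sub_self]
  obtain ⟨v, hv⟩ := P.exists_mulVec_eq_of_orthogonal_ker_transpose fun c hc =>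
    dotProduct_eq_zero_of_transpose_mulVec_eq_zero hMspan hres hc
  exact ⟨v, by rw [hv, add_sub_cancel]⟩

end NullSpaceMethod

theorem stmt5_general {n m k : ℕ} (K : Matrix (Fin n) (Fin n) ℝ) (P : Matrix (Fin n) (Fin m) ℝ)
    (M : Matrix (Fin n) (Fin k) ℝ)
    (hpd : ∀ c : Fin n → ℝ, c ≠ 0 → Pᵀ.mulVec c = 0 → 0 < c ⬝ᵥ K.mulVec c)
    (hMnull : ∀ u : Fin k → ℝ, Pᵀ.mulVec (M.mulVec u) = 0)
    (hMinj : Function.Injective M.mulVec)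
    (hMspan : ∀ c : Fin n → ℝ, Pᵀ.mulVec c = 0 → ∃ u : Fin k → ℝ, M.mulVec u = c)
    (a : Fin n → ℝ) (b : Fin m → ℝ) (hb : ∃ w₀ : Fin n → ℝ, Pᵀ.mulVec w₀ = b) :
    (∃! w : Fin n → ℝ, (Mᵀ * K).mulVec w = Mᵀ.mulVec a ∧ Pᵀ.mulVec w = b) ∧
      ∀ w : Fin n → ℝ, (Mᵀ * K).mulVec w = Mᵀ.mulVec a ∧ Pᵀ.mulVec w = b →
        ∃ v : Fin m → ℝ, K.mulVec w + P.mulVec v = a := by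
  obtain ⟨w₀, rfl⟩ := hb
  obtain ⟨w, hw⟩ := exists_null_space_solution hpd hMnull hMinj a w₀
  refine ⟨⟨w, hw, fun w' hw' => ?_⟩, fun w' hw' => exists_saddle_point_multiplier hMspan hw'.1⟩
  exact eq_of_null_space_system hpd hMspan (hw'.1.trans hw.1.symm) (hw'.2.trans hw.2.symm)

theorem stmt5 {n m k : ℕ} (K : Matrix (Fin n) (Fin n) ℝ) (P : Matrix (Fin n) (Fin m) ℝ)
    (M : Matrix (Fin n) (Fin k) ℝ)
    (hK : K.IsSymm)
    (hpd : ∀ c : Fin n → ℝ, c ≠ 0 → Pᵀ.mulVec c = 0 → 0 < c ⬝ᵥ K.mulVec c)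
    (hMnull : ∀ u : Fin k → ℝ, Pᵀ.mulVec (M.mulVec u) = 0)
    (hMinj : Function.Injective M.mulVec)
    (hMspan : ∀ c : Fin n → ℝ, Pᵀ.mulVec c = 0 → ∃ u : Fin k → ℝ, M.mulVec u = c)
    (a : Fin n → ℝ) (b : Fin m → ℝ) (hb : ∃ w₀ : Fin n → ℝ, Pᵀ.mulVec w₀ = b) :
    (∃! w : Fin n → ℝ, (Mᵀ * K).mulVec w = Mᵀ.mulVec a ∧ Pᵀ.mulVec w = b) ∧
      ∀ w : Fin n → ℝ, (Mᵀ * K).mulVec w = Mᵀ.mulVec a ∧ Pᵀ.mulVec w = b →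
        ∃ v : Fin m → ℝ, K.mulVec w + P.mulVec v = a :=
  stmt5_general K P M hpd hMnull hMinj hMspan a b hb
end

section
/- Let K: Ω×Ω → ℝ be symmetric and conditionally positive definite with respect to a finite-dimensional function space P on Ω, i.e., for every finite X = {x₁,…,x_n} ⊂ Ω of distinct points, ∑_{i,j} c_i c_j K(x_i,x_j) > 0 for all nonzero c ∈ ℝⁿ with ∑_i c_i p(x_i) = 0 for all p ∈ P. Then for any data (x_j, f_j), j = 1,…,n, with distinct x_j, there exist coefficients c ∈ ℝⁿ and p̃ ∈ P such that σ(x) = ∑_j c_j K(x,x_j) + p̃(x) satisfies σ(x_i) = f_i for i = 1,…,n and ∑_j c_j p(x_j) = 0 for all p ∈ P; moreover the coefficient vector c is unique (even when X is not a determining set for P). -/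
/-!
Evaluate everything at the nodes: in `ℝⁿ` let `W` be the image of `P` under evaluation and `A` the
kernel matrix. The conditions say `c ∈ Wᗮ` and `f - A c ∈ W`. Conditional positive definiteness
makes `c ↦ ⟪A c, c⟫` definite on `Wᗮ`, so `c ∈ Wᗮ`, `A c ∈ W` force `c = 0`; this gives uniqueness
and makes `(c, w) ↦ A c + w` injective on `Wᗮ × W`, a space of dimension `n`, hence surjective.
-/

open scoped InnerProductSpace
open Module

section Orthogonal

variable {V : Type*} [NormedAddCommGroup V] [InnerProductSpace ℝ V]
  {W : Submodule ℝ V} {A : V →ₗ[ℝ] V}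

theorem eq_zero_of_mem_orthogonal_of_apply_mem (hA : ∀ c ∈ Wᗮ, c ≠ 0 → ⟪A c, c⟫_ℝ ≠ 0)
    {c : V} (hc : c ∈ Wᗮ) (hAc : A c ∈ W) : c = 0 := by
  by_contra hc0
  exact hA c hc hc0 (hc (A c) hAc)

theorem existsUnique_mem_orthogonal_sub_apply_mem [FiniteDimensional ℝ V]
    (hA : ∀ c ∈ Wᗮ, c ≠ 0 → ⟪A c, c⟫_ℝ ≠ 0) (f : V) :
    ∃! c, c ∈ Wᗮ ∧ f - A c ∈ W := by
  let Φ : Wᗮ × W →ₗ[ℝ] V := (A ∘ₗ Wᗮ.subtype).coprod W.subtype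
  have hΦ : Function.Injective Φ := by
    refine (injective_iff_map_eq_zero Φ).2 fun ⟨c, w⟩ hcw => ?_
    have hAc : A c = -w := eq_neg_of_add_eq_zero_left hcw
    have hc : (c : V) = 0 :=
      eq_zero_of_mem_orthogonal_of_apply_mem hA c.2 (hAc ▸ W.neg_mem w.2)
    have hw : (w : V) = 0 := by simpa [hc] using hAc
    ext <;> simp [hc, hw]
  have hdim : finrank ℝ (Wᗮ × W) = finrank ℝ V := by
    rw [finrank_prod, add_comm, W.finrank_add_finrank_orthogonal]
  obtain ⟨⟨c, w⟩, hcw⟩ :=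
    (LinearMap.injective_iff_surjective_of_finrank_eq_finrank hdim).1 hΦ f
  have hfc : f - A c = w := by simp [← hcw, Φ]
  refine ⟨c, ⟨c.2, hfc ▸ w.2⟩, fun c' ⟨hc', hfc'⟩ => ?_⟩
  rw [← sub_eq_zero]
  refine eq_zero_of_mem_orthogonal_of_apply_mem hA (Wᗮ.sub_mem hc' c.2) ?_
  have h := W.sub_mem (hfc ▸ w.2) hfc'
  rwa [sub_sub_sub_cancel_left, ← map_sub] at h

end Orthogonal

section Nodes

variable {Ω ι : Type*} (x : ι → Ω)

noncomputable def evalAt : (Ω → ℝ) →ₗ[ℝ] EuclideanSpace ℝ ι :=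
  (WithLp.linearEquiv 2 ℝ (ι → ℝ)).symm.toLinearMap ∘ₗ LinearMap.funLeft ℝ ℝ x

@[simp]
theorem evalAt_apply (p : Ω → ℝ) (i : ι) : evalAt x p i = p (x i) := rfl

def kernelMatrix (K : Ω → Ω → ℝ) : Matrix ι ι ℝ := Matrix.of fun i j => K (x i) (x j)

variable [Fintype ι]

theorem mem_orthogonal_map_evalAt_iff (P : Submodule ℝ (Ω → ℝ)) (c : EuclideanSpace ℝ ι) :
    c ∈ (P.map (evalAt x))ᗮ ↔ ∀ p ∈ P, ∑ j, c j * p (x j) = 0 := by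
  simp [Submodule.mem_orthogonal, PiLp.inner_apply]

variable [DecidableEq ι] (K : Ω → Ω → ℝ)

theorem inner_toLpLin_kernelMatrix (c : EuclideanSpace ℝ ι) :
    ⟪Matrix.toLpLin 2 2 (kernelMatrix x K) c, c⟫_ℝ = ∑ i, ∑ j, c i * c j * K (x i) (x j) := by
  simp only [PiLp.inner_apply, Matrix.toLpLin_apply, Matrix.mulVec, dotProduct, kernelMatrix,
    Matrix.of_apply, RCLike.inner_apply, conj_trivial, Finset.mul_sum]
  exact Finset.sum_congr rfl fun i _ => Finset.sum_congr rfl fun j _ => by ring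

theorem sub_toLpLin_kernelMatrix_mem_map_evalAt_iff (P : Submodule ℝ (Ω → ℝ))
    (f c : EuclideanSpace ℝ ι) :
    f - Matrix.toLpLin 2 2 (kernelMatrix x K) c ∈ P.map (evalAt x) ↔
      ∃ p ∈ P, ∀ i, ∑ j, c j * K (x i) (x j) + p (x i) = f i := by
  simp only [Submodule.mem_map, WithLp.ext_iff, funext_iff, evalAt_apply]
  refine exists_congr fun p => and_congr_right fun _ => forall_congr' fun i => ?_
  simp [eq_sub_iff_add_eq, Matrix.mulVec, dotProduct, kernelMatrix, mul_comm, add_comm]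

end Nodes

theorem stmt18_general {Ω : Type*} (K : Ω → Ω → ℝ)
    (P : Submodule ℝ (Ω → ℝ))
    (hcpd : ∀ (N : ℕ) (X : Fin N → Ω), Function.Injective X →
      ∀ c : Fin N → ℝ, c ≠ 0 → (∀ p ∈ P, ∑ i, c i * p (X i) = 0) →
        0 < ∑ i, ∑ j, c i * c j * K (X i) (X j))
    (n : ℕ) (x : Fin n → Ω) (hx : Function.Injective x) (f : Fin n → ℝ) :
    ∃ c : Fin n → ℝ,
      ((∃ ptilde ∈ P,
          (∀ i, (∑ j, c j * K (x i) (x j)) + ptilde (x i) = f i)) ∧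
        (∀ p ∈ P, ∑ j, c j * p (x j) = 0)) ∧
      ∀ c' : Fin n → ℝ,
        ((∃ ptilde' ∈ P,
            (∀ i, (∑ j, c' j * K (x i) (x j)) + ptilde' (x i) = f i)) ∧
          (∀ p ∈ P, ∑ j, c' j * p (x j) = 0)) → c' = c := by
  have hdef : ∀ c ∈ (P.map (evalAt x))ᗮ, c ≠ 0 →
      ⟪Matrix.toLpLin 2 2 (kernelMatrix x K) c, c⟫_ℝ ≠ 0 := fun c hc hc0 => by
    rw [inner_toLpLin_kernelMatrix]
    exact (hcpd n x hx c (by simpa using hc0) ((mem_orthogonal_map_evalAt_iff x P c).1 hc)).ne'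
  obtain ⟨c, ⟨hc, hfc⟩, huniq⟩ := existsUnique_mem_orthogonal_sub_apply_mem hdef (WithLp.toLp 2 f)
  refine ⟨c, ⟨(sub_toLpLin_kernelMatrix_mem_map_evalAt_iff x K P _ c).1 hfc,
    (mem_orthogonal_map_evalAt_iff x P c).1 hc⟩, fun c' ⟨hfc', hc'⟩ => ?_⟩
  exact congrArg WithLp.ofLp <| huniq (WithLp.toLp 2 c')
    ⟨(mem_orthogonal_map_evalAt_iff x P _).2 hc',
      (sub_toLpLin_kernelMatrix_mem_map_evalAt_iff x K P _ _).2 hfc'⟩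

theorem stmt18 {Ω : Type*} (K : Ω → Ω → ℝ) (hsymm : ∀ x y, K x y = K y x)
    (P : Submodule ℝ (Ω → ℝ)) (hfin : FiniteDimensional ℝ P)
    (hcpd : ∀ (N : ℕ) (X : Fin N → Ω), Function.Injective X →
      ∀ c : Fin N → ℝ, c ≠ 0 → (∀ p ∈ P, ∑ i, c i * p (X i) = 0) →
        0 < ∑ i, ∑ j, c i * c j * K (X i) (X j))
    (n : ℕ) (x : Fin n → Ω) (hx : Function.Injective x) (f : Fin n → ℝ) :
    ∃ c : Fin n → ℝ,
      ((∃ ptilde ∈ P,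
          (∀ i, (∑ j, c j * K (x i) (x j)) + ptilde (x i) = f i)) ∧
        (∀ p ∈ P, ∑ j, c j * p (x j) = 0)) ∧
      ∀ c' : Fin n → ℝ,
        ((∃ ptilde' ∈ P,
            (∀ i, (∑ j, c' j * K (x i) (x j)) + ptilde' (x i) = f i)) ∧
          (∀ p ∈ P, ∑ j, c' j * p (x j) = 0)) → c' = c :=
  stmt18_general K P hcpd n x hx f
end
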